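/- arXiv:1606.03961 — 6 statements merged into one kernel-verified Lean document; each statement's English description precedes it below -/
import Mathlib

section
/- Let V and H be Hilbert spaces, j : V → H bounded linear with dense range, and 𝔞 : V × V → ℝ a continuous bilinear form such that V = V_j(𝔞) + ker j and V_j(𝔞) ∩ ker j = {0}. Then the relation A := {(x,f) ∈ H × H : ∃ u ∈ V, x = j(u) and ∀ v ∈ V, 𝔞(u,v) = ⟨f, j(v)⟩_H} is the graph of a (single-valued) linear operator on H, provided additionally that for u ∈ V with j(u) = 0 and 𝔞(u,v) = 0 for all v ∈ ker j one has u = 0. -/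
/-!
Two representatives `u, w` of the same `x` differ by an element of `ker j` on which `𝔞(·, v)`
vanishes for every `v ∈ ker j`, so `u = w` by (*). Then `⟪f - g, j v⟫ = 𝔞(u - w, v) = 0` for all
`v`, and the density of the range of `j` gives `f = g`. Linearity of the relation is inherited from
that of `j`, `𝔞` and the inner product.
-/

open scoped RealInnerProductSpace

section

variable {V H : Type*} [AddCommGroup V] [Module ℝ V] [TopologicalSpace V]
  [NormedAddCommGroup H] [InnerProductSpace ℝ H]

def associatedRelation (j : V →L[ℝ] H) (a : V →L[ℝ] V →L[ℝ] ℝ) : Submodule ℝ (H × H) where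
  carrier := {p | ∃ u : V, p.1 = j u ∧ ∀ v : V, a u v = ⟪p.2, j v⟫}
  zero_mem' := ⟨0, by simp, by simp⟩
  add_mem' := by
    rintro p q ⟨u, hpu, hu⟩ ⟨w, hqw, hw⟩
    exact ⟨u + w, by simp [hpu, hqw], fun v => by simp [hu v, hw v, inner_add_left]⟩
  smul_mem' := by
    rintro c p ⟨u, hpu, hu⟩
    exact ⟨c • u, by simp [hpu], fun v => by simp [hu v, inner_smul_left]⟩

theorem associatedRelation_eq_of_mem {j : V →L[ℝ] H} {a : V →L[ℝ] V →L[ℝ] ℝ}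
    (hdense : DenseRange j) (hstar : ∀ u : V, j u = 0 → (∀ v : V, j v = 0 → a u v = 0) → u = 0)
    {x f g : H} (hf : (x, f) ∈ associatedRelation j a) (hg : (x, g) ∈ associatedRelation j a) :
    f = g := by
  obtain ⟨u, hxu : x = j u, hu : ∀ v, a u v = ⟪f, j v⟫⟩ := hf
  obtain ⟨w, hxw : x = j w, hw : ∀ v, a w v = ⟪g, j v⟫⟩ := hg
  have hker : j (u - w) = 0 := by rw [map_sub, ← hxu, ← hxw, sub_self]
  have hform : ∀ v : V, j v = 0 → a (u - w) v = 0 := fun v hv => by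
    rw [map_sub, sub_apply, hu, hw, hv, inner_zero_right, inner_zero_right, sub_self]
  have huw : u = w := sub_eq_zero.mp (hstar _ hker hform)
  exact hdense.eq_of_inner_left ℝ fun v => by rw [← hu, ← hw, huw]

end

theorem associated_relation_is_graph_of_linear_operator_general
    {V H : Type*} [NormedAddCommGroup V] [InnerProductSpace ℝ V]
    [NormedAddCommGroup H] [InnerProductSpace ℝ H]
    (j : V →L[ℝ] H) (hdense : DenseRange j)
    (a : V →L[ℝ] V →L[ℝ] ℝ)
    (hstar : ∀ u : V, j u = 0 → (∀ v : V, j v = 0 → a u v = 0) → u = 0) :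
    (∀ x f g : H,
        (∃ u : V, x = j u ∧ ∀ v : V, a u v = ⟪f, j v⟫) →
        (∃ u : V, x = j u ∧ ∀ v : V, a u v = ⟪g, j v⟫) → f = g) ∧
      ∃ S : Submodule ℝ (H × H),
        (S : Set (H × H)) =
          {p : H × H | ∃ u : V, p.1 = j u ∧ ∀ v : V, a u v = ⟪p.2, j v⟫} :=
  ⟨fun _ _ _ hf hg => associatedRelation_eq_of_mem hdense hstar hf hg,
    associatedRelation j a, rfl⟩

/-- If `V = V_j(a) + ker j`, `V_j(a) ∩ ker j = {0}`, and condition (*) holds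
(`j u = 0` and `a(u,v) = 0` for all `v ∈ ker j` imply `u = 0`), then the relation
`A = {(x,f) : ∃ u, x = j u and a(u,v) = ⟨f, j v⟩ for all v}` is the graph of a single-valued
linear operator on `H`. -/
theorem associated_relation_is_graph_of_linear_operator
    {V H : Type*} [NormedAddCommGroup V] [InnerProductSpace ℝ V] [CompleteSpace V]
    [NormedAddCommGroup H] [InnerProductSpace ℝ H] [CompleteSpace H]
    (j : V →L[ℝ] H) (hdense : DenseRange j)
    (a : V →L[ℝ] V →L[ℝ] ℝ)
    (hsum : ∀ u : V, ∃ w z : V, (∀ v : V, j v = 0 → a w v = 0) ∧ j z = 0 ∧ u = w + z)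
    (hcap : ∀ u : V, (∀ v : V, j v = 0 → a u v = 0) → j u = 0 → u = 0)
    (hstar : ∀ u : V, j u = 0 → (∀ v : V, j v = 0 → a u v = 0) → u = 0) :
    (∀ x f g : H,
        (∃ u : V, x = j u ∧ ∀ v : V, a u v = ⟪f, j v⟫) →
        (∃ u : V, x = j u ∧ ∀ v : V, a u v = ⟪g, j v⟫) → f = g) ∧
      ∃ S : Submodule ℝ (H × H),
        (S : Set (H × H)) =
          {p : H × H | ∃ u : V, p.1 = j u ∧ ∀ v : V, a u v = ⟪p.2, j v⟫} :=
  associated_relation_is_graph_of_linear_operator_general j hdense a hstar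
end

section
/- Let V, H, H̃ be Hilbert spaces, j : V → H bounded with dense range, and 𝔞 : V × V → ℝ a continuous bilinear form. Suppose 𝔞 is compactly elliptic: there exists a compact operator j̃ : V → H̃ and α̃ > 0 such that 𝔞(u,u) + ‖j̃(u)‖²_{H̃} ≥ α̃‖u‖²_V for all u ∈ V. Suppose moreover condition (*): if u ∈ V, j(u) = 0 and 𝔞(u,v) = 0 for all v ∈ ker j, then u = 0. Then the restriction of j to W := {u ∈ V : ∀ v ∈ ker j, 𝔞(u,v) = 0} is injective, and there exist α > 0 and ω ∈ ℝ with 𝔞(u,u) + ω‖j(u)‖²_H ≥ α‖u‖²_V for all u ∈ W. -/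
/-!
Argue by contradiction: if no `α, ω` work, there are unit vectors `uₙ ∈ W` with `‖j uₙ‖ → 0`
while compact ellipticity keeps `‖j̃ uₙ‖` away from `0`. A weak limit `x` of a subsequence lies in
`W` and has `j x = 0`, so `x = 0` by (*); but the compact operator `j̃` turns weak convergence into
norm convergence, forcing `j̃ uₙ → 0` along the subsequence. In other words, on the Hilbert
space `W`, where `j` is injective, the compact `j̃` satisfies an Ehrling inequality
`‖j̃ u‖² ≤ ε ‖u‖² + C ‖j u‖²`, and `ε = α̃ / 2` gives the claim with `ω = C`.
-/

open Filter Topology InnerProductSpace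

section Normed

variable {𝕜 E F : Type*} [RCLike 𝕜] [NormedAddCommGroup E] [NormedSpace 𝕜 E]
  [NormedAddCommGroup F] [NormedSpace 𝕜 F]

theorem eq_of_tendsto_of_forall_dual_tendsto {ι : Type*} {l : Filter ι} [l.NeBot] {u : ι → F}
    {x y : F} (hy : Tendsto u l (𝓝 y))
    (hx : ∀ f : StrongDual 𝕜 F, Tendsto (fun i => f (u i)) l (𝓝 (f x))) : x = y :=
  (SeparatingDual.eq_iff_forall_dual_eq (R := 𝕜)).2 fun f =>
    tendsto_nhds_unique (hx f) ((f.continuous.tendsto y).comp hy)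

theorem IsCompactOperator.tendsto_of_forall_dual_tendsto {T : E →L[𝕜] F}
    (hT : IsCompactOperator T) {u : ℕ → E} {C : ℝ} (hu : ∀ n, ‖u n‖ ≤ C) {x : E}
    (hx : ∀ f : StrongDual 𝕜 E, Tendsto (fun n => f (u n)) atTop (𝓝 (f x))) :
    Tendsto (fun n => T (u n)) atTop (𝓝 (T x)) := by
  refine tendsto_of_subseq_tendsto fun ns hns => ?_
  have hbdd : Bornology.IsBounded (Set.range (u ∘ ns)) :=
    isBounded_iff_forall_norm_le.2 ⟨C, by rintro _ ⟨n, rfl⟩; exact hu (ns n)⟩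
  obtain ⟨y, -, ms, hms, hy⟩ := (hT.isCompact_closure_image_of_bounded hbdd).tendsto_subseq
    fun n => subset_closure (Set.mem_image_of_mem T (Set.mem_range_self n))
  have hyx : T x = y := eq_of_tendsto_of_forall_dual_tendsto (𝕜 := 𝕜) hy fun f =>
    (hx (f ∘L T)).comp (hns.comp hms.tendsto_atTop)
  exact ⟨ms, hyx ▸ hy⟩

end Normed

section Hilbert

variable {𝕜 E : Type*} [RCLike 𝕜] [NormedAddCommGroup E] [InnerProductSpace 𝕜 E] [CompleteSpace E]

-- Riesz identifies `E` with its dual, where sequential Banach–Alaoglu applies.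
theorem exists_subseq_forall_dual_tendsto_of_separableSpace [TopologicalSpace.SeparableSpace E]
    {u : ℕ → E} {C : ℝ} (hu : ∀ n, ‖u n‖ ≤ C) :
    ∃ (x : E) (φ : ℕ → ℕ), StrictMono φ ∧
      ∀ f : StrongDual 𝕜 E, Tendsto (fun k => f (u (φ k))) atTop (𝓝 (f x)) := by
  obtain ⟨g, -, φ, hφ, hg⟩ := WeakDual.isSeqCompact_closedBall 𝕜 E 0 C
    (x := fun n => StrongDual.toWeakDual (toDual 𝕜 E (u n))) fun n => by simpa using hu n
  refine ⟨(toDual 𝕜 E).symm (WeakDual.toStrongDual g), φ, hφ, fun f => ?_⟩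
  have hf : ∀ y, f y = starRingEnd 𝕜 (toDual 𝕜 E y ((toDual 𝕜 E).symm f)) := fun y => by
    rw [toDual_apply_apply, inner_conj_symm, toDual_symm_apply]
  simp only [hf, LinearIsometryEquiv.apply_symm_apply]
  exact (RCLike.continuous_conj.tendsto _).comp (((WeakDual.eval_continuous _).tendsto g).comp hg)

theorem exists_subseq_forall_dual_tendsto {u : ℕ → E} {C : ℝ} (hu : ∀ n, ‖u n‖ ≤ C) :
    ∃ (x : E) (φ : ℕ → ℕ), StrictMono φ ∧
      ∀ f : StrongDual 𝕜 E, Tendsto (fun k => f (u (φ k))) atTop (𝓝 (f x)) := by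
  set E₀ := (Submodule.span 𝕜 (Set.range u)).topologicalClosure
  have : TopologicalSpace.SeparableSpace E₀ := by
    refine TopologicalSpace.IsSeparable.separableSpace ?_
    rw [Submodule.topologicalClosure_coe]
    exact (Set.countable_range u).isSeparable.span.closure
  have hmem : ∀ n, u n ∈ E₀ :=
    fun n => Submodule.le_topologicalClosure _ (Submodule.subset_span ⟨n, rfl⟩)
  obtain ⟨x, φ, hφ, hx⟩ := exists_subseq_forall_dual_tendsto_of_separableSpace (𝕜 := 𝕜)
    (u := fun n => (⟨u n, hmem n⟩ : E₀)) hu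
  exact ⟨x, φ, hφ, fun f => hx (f ∘L E₀.subtypeL)⟩

variable {F G : Type*} [NormedAddCommGroup F] [NormedSpace 𝕜 F]
  [NormedAddCommGroup G] [NormedSpace 𝕜 G]

theorem IsCompactOperator.exists_sq_norm_le_of_norm_eq_one {T : E →L[𝕜] F}
    (hT : IsCompactOperator T) {S : E →L[𝕜] G} (hS : Function.Injective S) {ε : ℝ} (hε : 0 < ε) :
    ∃ C, ∀ u, ‖u‖ = 1 → ‖T u‖ ^ 2 ≤ ε + C * ‖S u‖ ^ 2 := by
  by_contra! h
  choose v hv1 hv using fun n : ℕ => h (((n : ℝ) + 1) ^ 2)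
  have hSv : Tendsto (fun n => S (v n)) atTop (𝓝 0) := by
    refine squeeze_zero_norm (a := fun n : ℕ => ‖T‖ * (1 / ((n : ℝ) + 1))) (fun n => ?_) ?_
    · have hTv : ‖T (v n)‖ ≤ ‖T‖ := by simpa [hv1 n] using T.le_opNorm (v n)
      rw [mul_one_div, le_div_iff₀ (by positivity)]
      nlinarith [hv n, norm_nonneg (S (v n)), norm_nonneg (T (v n))]
    · simpa using tendsto_one_div_add_atTop_nhds_zero_nat.const_mul ‖T‖
  obtain ⟨x, φ, hφ, hx⟩ := exists_subseq_forall_dual_tendsto (𝕜 := 𝕜) fun n => (hv1 n).le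
  have hx0 : x = 0 := hS <| by
    rw [map_zero]
    exact eq_of_tendsto_of_forall_dual_tendsto (𝕜 := 𝕜) (hSv.comp hφ.tendsto_atTop)
      fun f => hx (f ∘L S)
  have hTv : Tendsto (fun k => ‖T (v (φ k))‖ ^ 2) atTop (𝓝 0) := by
    simpa [hx0] using
      (hT.tendsto_of_forall_dual_tendsto (fun k => (hv1 (φ k)).le) hx).norm.pow 2
  have hε_le : ∀ k, ε ≤ ‖T (v (φ k))‖ ^ 2 := fun k =>
    (le_add_of_nonneg_right (by positivity)).trans (hv (φ k)).le
  linarith [ge_of_tendsto' hTv hε_le]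

theorem IsCompactOperator.exists_sq_norm_le {T : E →L[𝕜] F} (hT : IsCompactOperator T)
    {S : E →L[𝕜] G} (hS : Function.Injective S) {ε : ℝ} (hε : 0 < ε) :
    ∃ C, ∀ u, ‖T u‖ ^ 2 ≤ ε * ‖u‖ ^ 2 + C * ‖S u‖ ^ 2 := by
  obtain ⟨C, hC⟩ := hT.exists_sq_norm_le_of_norm_eq_one hS hε
  refine ⟨C, fun u => ?_⟩
  rcases eq_or_ne u 0 with rfl | hu
  · simp
  have hn : 0 < ‖u‖ := norm_pos_iff.2 hu
  have h := hC ((‖u‖⁻¹ : 𝕜) • u) (by simp [norm_smul, hn.ne'])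
  simp only [map_smul, norm_smul, norm_inv, RCLike.norm_ofReal, abs_of_pos hn, mul_pow] at h
  have := mul_le_mul_of_nonneg_left h (sq_nonneg ‖u‖)
  field_simp at this
  linarith

end Hilbert

section Form

variable {V H : Type*} [NormedAddCommGroup V] [NormedSpace ℝ V] [NormedAddCommGroup H]
  [NormedSpace ℝ H]

/-- The space `V_j(𝔞)`. -/
def kerOrthogonal (a : V →L[ℝ] V →L[ℝ] ℝ) (j : V →L[ℝ] H) : Submodule ℝ V where
  carrier := {u | ∀ v, j v = 0 → a u v = 0}
  add_mem' {u w} hu hw v hv := by simp [hu v hv, hw v hv]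
  zero_mem' v _ := by simp
  smul_mem' c u hu v hv := by simp [hu v hv]

theorem isClosed_kerOrthogonal (a : V →L[ℝ] V →L[ℝ] ℝ) (j : V →L[ℝ] H) :
    IsClosed (kerOrthogonal a j : Set V) := by
  have : (kerOrthogonal a j : Set V) = ⋂ v ∈ {v | j v = 0}, {u | a u v = 0} := by
    ext; simp [kerOrthogonal]
  rw [this]
  exact isClosed_biInter fun v _ => isClosed_eq (a.flip v).continuous continuous_const

theorem injOn_kerOrthogonal {a : V →L[ℝ] V →L[ℝ] ℝ} {j : V →L[ℝ] H}
    (hstar : ∀ u : V, j u = 0 → (∀ v : V, j v = 0 → a u v = 0) → u = 0) :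
    Set.InjOn j (kerOrthogonal a j) := fun p hp q hq hpq =>
  sub_eq_zero.1 <| hstar _ (by simp [hpq]) fun v hv => by simp [hp v hv, hq v hv]

end Form

theorem compactly_elliptic_implies_elliptic_on_Vj_general
    {V H H' : Type*} [NormedAddCommGroup V] [InnerProductSpace ℝ V] [CompleteSpace V]
    [NormedAddCommGroup H] [InnerProductSpace ℝ H]
    [NormedAddCommGroup H'] [InnerProductSpace ℝ H']
    (j : V →L[ℝ] H)
    (jt : V →L[ℝ] H') (hcompact : IsCompactOperator jt)
    (a : V →L[ℝ] V →L[ℝ] ℝ) (αt : ℝ) (hαt : 0 < αt)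
    (hce : ∀ u : V, a u u + ‖jt u‖ ^ 2 ≥ αt * ‖u‖ ^ 2)
    (hstar : ∀ u : V, j u = 0 → (∀ v : V, j v = 0 → a u v = 0) → u = 0) :
    Set.InjOn j {u : V | ∀ v : V, j v = 0 → a u v = 0} ∧
      ∃ α ω : ℝ, 0 < α ∧
        ∀ u ∈ {u : V | ∀ v : V, j v = 0 → a u v = 0},
          a u u + ω * ‖j u‖ ^ 2 ≥ α * ‖u‖ ^ 2 := by
  set W := kerOrthogonal a j
  have hinj : Set.InjOn j W := injOn_kerOrthogonal hstar
  have : CompleteSpace W := (isClosed_kerOrthogonal a j).completeSpace_coe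
  obtain ⟨C, hC⟩ := IsCompactOperator.exists_sq_norm_le (T := jt ∘L W.subtypeL)
    (hcompact.comp_clm W.subtypeL) (S := j ∘L W.subtypeL) hinj.injective (half_pos hαt)
  refine ⟨hinj, αt / 2, C, half_pos hαt, fun u hu => ?_⟩
  have hjt : ‖jt u‖ ^ 2 ≤ αt / 2 * ‖u‖ ^ 2 + C * ‖j u‖ ^ 2 := hC ⟨u, hu⟩
  linarith [hce u]

/-- If the continuous bilinear form `a` is compactly elliptic and satisfies
condition (*), then `j` is injective on `W = V_j(a)` and `a` is `j`-elliptic on `W`. -/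
theorem compactly_elliptic_implies_elliptic_on_Vj
    {V H H' : Type*} [NormedAddCommGroup V] [InnerProductSpace ℝ V] [CompleteSpace V]
    [NormedAddCommGroup H] [InnerProductSpace ℝ H] [CompleteSpace H]
    [NormedAddCommGroup H'] [InnerProductSpace ℝ H'] [CompleteSpace H']
    (j : V →L[ℝ] H) (hdense : DenseRange j)
    (jt : V →L[ℝ] H') (hcompact : IsCompactOperator jt)
    (a : V →L[ℝ] V →L[ℝ] ℝ) (αt : ℝ) (hαt : 0 < αt)
    (hce : ∀ u : V, a u u + ‖jt u‖ ^ 2 ≥ αt * ‖u‖ ^ 2)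
    (hstar : ∀ u : V, j u = 0 → (∀ v : V, j v = 0 → a u v = 0) → u = 0) :
    Set.InjOn j {u : V | ∀ v : V, j v = 0 → a u v = 0} ∧
      ∃ α ω : ℝ, 0 < α ∧
        ∀ u ∈ {u : V | ∀ v : V, j v = 0 → a u v = 0},
          a u u + ω * ‖j u‖ ^ 2 ≥ α * ‖u‖ ^ 2 :=
  compactly_elliptic_implies_elliptic_on_Vj_general j jt hcompact a αt hαt hce hstar
end

section
/- Let Ω ⊂ ℝ^N be a bounded open set with Lipschitz boundary, assume a symmetric uniformly elliptic with constant κ, b, c ∈ L^∞(Ω)^N, d ∈ L^∞(Ω), and λ ∉ σ(A_D) where A_D is the Dirichlet realization of 𝒜u = −div(a∇u) + b·∇u − div(cu) + du. Then H¹(Ω) = H¹₀(Ω) ⊕ V_j(𝔞_λ), where 𝔞_λ(u,v) = ∫_Ω a∇u·∇v + ∫_Ω (b·∇u)v + ∫_Ω u(c·∇v) + ∫_Ω duv − λ∫_Ω uv and V_j(𝔞_λ) = {u ∈ H¹(Ω) : 𝔞_λ(u,v) = 0 for all v ∈ H¹₀(Ω)}. -/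
open scoped RealInnerProductSpace

/-- The abstract form of `λ ∉ σ(A_D)`, with `b` the form of `λ − L`: every continuous
functional is represented on `V₀` by `b u₀` for a unique `u₀ ∈ V₀`. -/
def UniquelySolvableOn {𝕜 V : Type*} [NontriviallyNormedField 𝕜] [NormedAddCommGroup V]
    [NormedSpace 𝕜 V] (b : V →L[𝕜] V →L[𝕜] 𝕜) (V₀ : Submodule 𝕜 V) : Prop :=
  ∀ Φ : V →L[𝕜] 𝕜, ∃ u₀ ∈ V₀,
    (∀ v ∈ V₀, b u₀ v = Φ v) ∧ ∀ w ∈ V₀, (∀ v ∈ V₀, b w v = Φ v) → w = u₀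

namespace UniquelySolvableOn

variable {𝕜 V : Type*} [NontriviallyNormedField 𝕜] [NormedAddCommGroup V] [NormedSpace 𝕜 V]
  {b : V →L[𝕜] V →L[𝕜] 𝕜} {V₀ : Submodule 𝕜 V}

/-- Solving for `Φ = b u` splits off the part of `u` that is `b`-orthogonal to `V₀`. -/
theorem exists_mem_add (h : UniquelySolvableOn b V₀) (u : V) :
    ∃ u₀ ∈ V₀, ∃ u₁ : V, (∀ v ∈ V₀, b u₁ v = 0) ∧ u = u₀ + u₁ := by
  obtain ⟨u₀, hu₀, hrep, -⟩ := h (b u)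
  refine ⟨u₀, hu₀, u - u₀, fun v hv => ?_, (add_sub_cancel u₀ u).symm⟩
  rw [map_sub, sub_apply, hrep v hv, sub_self]

theorem eq_zero_of_mem (h : UniquelySolvableOn b V₀) {u : V} (hu : u ∈ V₀)
    (horth : ∀ v ∈ V₀, b u v = 0) : u = 0 := by
  obtain ⟨u₀, -, -, huniq⟩ := h 0
  have hu_eq : u = u₀ := huniq u hu horth
  have hzero_eq : 0 = u₀ := huniq 0 V₀.zero_mem fun v _ => by simp
  rw [hu_eq, ← hzero_eq]

end UniquelySolvableOn

theorem H1_decomposition_general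
    {V H : Type*} [NormedAddCommGroup V] [InnerProductSpace ℝ V]
    [NormedAddCommGroup H] [InnerProductSpace ℝ H]
    (ι : V →L[ℝ] H)
    (V₀ : Submodule ℝ V)
    (a : V →L[ℝ] V →L[ℝ] ℝ) (lam : ℝ)
    -- `λ − L : H¹₀(Ω) → H⁻¹(Ω)` is invertible (`λ ∉ σ(A_D)`):
    (hres : ∀ Φ : V →L[ℝ] ℝ, ∃ u₀ ∈ V₀,
        (∀ v ∈ V₀, lam * ⟪ι u₀, ι v⟫ - a u₀ v = Φ v) ∧
        ∀ w ∈ V₀, (∀ v ∈ V₀, lam * ⟪ι w, ι v⟫ - a w v = Φ v) → w = u₀) :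
    (∀ u : V, ∃ u₀ ∈ V₀, ∃ u₁ : V,
        (∀ v ∈ V₀, a u₁ v - lam * ⟪ι u₁, ι v⟫ = 0) ∧ u = u₀ + u₁) ∧
      ∀ u ∈ V₀, (∀ v ∈ V₀, a u v - lam * ⟪ι u, ι v⟫ = 0) → u = 0 := by
  set b : V →L[ℝ] V →L[ℝ] ℝ :=
    lam • ((innerSL ℝ).bilinearComp ι ι : V →L[ℝ] V →L[ℝ] ℝ) - a
  have hb : ∀ u v, b u v = lam * ⟪ι u, ι v⟫ - a u v := fun u v => by simp [b]
  have hsolv : UniquelySolvableOn b V₀ := by simpa only [UniquelySolvableOn, hb] using hres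
  have hsign : ∀ u v, a u v - lam * ⟪ι u, ι v⟫ = 0 ↔ b u v = 0 := fun u v => by
    rw [hb, ← neg_sub, neg_eq_zero]
  simp only [hsign]
  exact ⟨hsolv.exists_mem_add, fun u hu => hsolv.eq_zero_of_mem hu⟩

/-- Decomposition `H¹(Ω) = H¹₀(Ω) ⊕ V_j(𝔞_λ)` when `λ ∉ σ(A_D)`.
Abstractly: `V` is the Hilbert space `H¹(Ω)`, `V₀` its closed subspace `H¹₀(Ω)`,
`ι : V → H = L²(Ω)` the embedding, `a` the form of the elliptic operator, and
`𝔞_λ(u,v) = 𝔞(u,v) − λ⟨ιu, ιv⟩`. The condition `λ ∉ σ(A_D)` is encoded by the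
invertibility of `λ − L : H¹₀(Ω) → H⁻¹(Ω)`: every continuous functional is uniquely
represented. The conclusion asserts `V = V₀ + V_j(𝔞_λ)` and `V₀ ∩ V_j(𝔞_λ) = {0}`. -/
theorem H1_decomposition
    {V H : Type*} [NormedAddCommGroup V] [InnerProductSpace ℝ V] [CompleteSpace V]
    [NormedAddCommGroup H] [InnerProductSpace ℝ H] [CompleteSpace H]
    (ι : V →L[ℝ] H) (hι : Function.Injective ι)
    (V₀ : Submodule ℝ V) (hV₀ : IsClosed (V₀ : Set V))
    (a : V →L[ℝ] V →L[ℝ] ℝ) (lam : ℝ)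
    -- `λ − L : H¹₀(Ω) → H⁻¹(Ω)` is invertible (`λ ∉ σ(A_D)`):
    (hres : ∀ Φ : V →L[ℝ] ℝ, ∃ u₀ ∈ V₀,
        (∀ v ∈ V₀, lam * ⟪ι u₀, ι v⟫ - a u₀ v = Φ v) ∧
        ∀ w ∈ V₀, (∀ v ∈ V₀, lam * ⟪ι w, ι v⟫ - a w v = Φ v) → w = u₀) :
    (∀ u : V, ∃ u₀ ∈ V₀, ∃ u₁ : V,
        (∀ v ∈ V₀, a u₁ v - lam * ⟪ι u₁, ι v⟫ = 0) ∧ u = u₀ + u₁) ∧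
      ∀ u ∈ V₀, (∀ v ∈ V₀, a u v - lam * ⟪ι u, ι v⟫ = 0) → u = 0 :=
  H1_decomposition_general ι V₀ a lam hres
end

section
/- Let Ω be bounded open with Lipschitz boundary, coefficients as in the Hypothesis with ellipticity constant κ, and λ ∉ σ(A_D). Then there exists ω ∈ ℝ such that 𝔞_λ(u,u) + ω‖u|_{∂Ω}‖²_{L²(∂Ω)} ≥ (κ/4)‖u‖²_{H¹(Ω)} for all u ∈ V_j(𝔞_λ). Consequently the Dirichlet-to-Neumann form 𝔞_λ restricted to V_j(𝔞_λ) is elliptic with respect to the trace map. -/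
/-!
On the closed subspace `V_j(𝔞_λ)` the trace `j` is injective, so the adjoint of the restricted
trace has dense range: every functional `⟪x, ι ·⟫` is, up to `δ ‖·‖`, of the form `⟪y, j ·⟫`.
Covering the `ι`-image of the unit sphere by finitely many `δ`-balls (compactness of `ι`) yields
`‖ι u‖² ≤ ε + c ‖j u‖` for unit vectors, and AM-GM plus homogeneity give the Ehrling-type inequality
`‖ι u‖² ≤ ε ‖u‖² + c_ε ‖j u‖²` on `V_j(𝔞_λ)`. With `ε = κ / (4 (|C| + 1))` the term `C ‖ι u‖²`
of the global estimate is absorbed into `(κ/4) ‖u‖² + ω ‖j u‖²`.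
-/

open scoped RealInnerProductSpace

open Function InnerProduct

namespace ContinuousLinearMap

variable {𝕜 E F : Type*} [RCLike 𝕜] [NormedAddCommGroup E] [InnerProductSpace 𝕜 E] [CompleteSpace E]
  [NormedAddCommGroup F] [InnerProductSpace 𝕜 F] [CompleteSpace F]

theorem denseRange_adjoint_of_injective {T : E →L[𝕜] F} (hT : Injective T) : DenseRange (T†) := by
  have hker : (T†).rangeᗮ = ⊥ := by
    rw [orthogonal_range, adjoint_adjoint, LinearMap.ker_eq_bot]
    exact hT
  exact Submodule.dense_iff_topologicalClosure_eq_top.2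
    (Submodule.topologicalClosure_eq_top_iff.2 hker)

end ContinuousLinearMap

theorem sq_norm_le_of_forall_norm_eq_one {E G G' : Type*} [NormedAddCommGroup E] [NormedSpace ℝ E]
    [NormedAddCommGroup G] [NormedSpace ℝ G] [NormedAddCommGroup G'] [NormedSpace ℝ G']
    {A : E →L[ℝ] G} {B : E →L[ℝ] G'} {a b : ℝ}
    (h : ∀ w, ‖w‖ = 1 → ‖A w‖ ^ 2 ≤ a + b * ‖B w‖ ^ 2) (u : E) :
    ‖A u‖ ^ 2 ≤ a * ‖u‖ ^ 2 + b * ‖B u‖ ^ 2 := by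
  rcases eq_or_ne u 0 with rfl | hu
  · simp
  have hw := h (‖u‖⁻¹ • u) (norm_smul_inv_norm hu)
  simp only [map_smul, norm_smul, norm_inv, norm_norm, mul_pow] at hw
  have hpos : 0 < ‖u‖ ^ 2 := by positivity
  have := mul_le_mul_of_nonneg_left hw hpos.le
  field_simp at this
  linarith

section Ehrling

variable {K H F : Type*} [NormedAddCommGroup K] [InnerProductSpace ℝ K] [CompleteSpace K]
  [NormedAddCommGroup H] [InnerProductSpace ℝ H]
  [NormedAddCommGroup F] [InnerProductSpace ℝ F] [CompleteSpace F]

theorem exists_le_mul_norm_add_mul_norm_of_injective {T : K →L[ℝ] F} (hT : Injective T)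
    (f : K →L[ℝ] ℝ) {δ : ℝ} (hδ : 0 < δ) : ∃ c ≥ 0, ∀ w, f w ≤ δ * ‖w‖ + c * ‖T w‖ := by
  set z := (InnerProductSpace.toDual ℝ K).symm f
  obtain ⟨y, hy⟩ :=
    Metric.denseRange_iff.1 (ContinuousLinearMap.denseRange_adjoint_of_injective hT) z δ hδ
  refine ⟨‖y‖, norm_nonneg y, fun w => ?_⟩
  calc f w = ⟪z - (T†) y, w⟫ + ⟪y, T w⟫ := by
        rw [inner_sub_left, ContinuousLinearMap.adjoint_inner_left,
          InnerProductSpace.toDual_symm_apply]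
        ring
    _ ≤ ‖z - (T†) y‖ * ‖w‖ + ‖y‖ * ‖T w‖ :=
        add_le_add (real_inner_le_norm _ _) (real_inner_le_norm _ _)
    _ ≤ δ * ‖w‖ + ‖y‖ * ‖T w‖ := by
        gcongr
        rw [← dist_eq_norm]; exact hy.le


namespace IsCompactOperator

variable {ι : K →L[ℝ] H} {T : K →L[ℝ] F}

theorem exists_sq_norm_le_add_of_norm_eq_one (hι : IsCompactOperator ι) (hT : Injective T)
    {ε : ℝ} (hε : 0 < ε) : ∃ c, ∀ w, ‖w‖ = 1 → ‖ι w‖ ^ 2 ≤ ε + c * ‖T w‖ := by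
  set δ := ε / (‖ι‖ + 1)
  have hδ : 0 < δ := by positivity
  obtain ⟨t, ht, hnet⟩ := Metric.totallyBounded_iff.1
    ((hι.isCompact_closure_image_closedBall 1).totallyBounded.subset subset_closure) δ hδ
  choose c hc₀ hc using fun x : H =>
    exists_le_mul_norm_add_mul_norm_of_injective hT ((innerSL ℝ x).comp ι) hδ
  refine ⟨∑ x ∈ ht.toFinset, c x, fun w hw => ?_⟩
  obtain ⟨x, hxt, hx⟩ : ∃ x ∈ t, ‖ι w - x‖ < δ := by
    simpa [dist_eq_norm] using hnet ⟨w, by simp [hw], rfl⟩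
  have hιw : ‖ι w‖ ≤ ‖ι‖ := by simpa [hw] using ι.le_opNorm w
  have hcx : c x ≤ ∑ x ∈ ht.toFinset, c x :=
    Finset.single_le_sum (fun x _ => hc₀ x) (ht.mem_toFinset.2 hxt)
  calc ‖ι w‖ ^ 2 = ⟪ι w - x, ι w⟫ + ⟪x, ι w⟫ := by
        rw [inner_sub_left, real_inner_self_eq_norm_sq]; ring
    _ ≤ δ * ‖ι‖ + (δ + c x * ‖T w‖) := by
        gcongr
        · exact (real_inner_le_norm _ _).trans (mul_le_mul hx.le hιw (norm_nonneg _) hδ.le)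
        · simpa [hw] using hc x w
    _ = ε + c x * ‖T w‖ := by
        simp only [δ]; field_simp; ring
    _ ≤ ε + (∑ x ∈ ht.toFinset, c x) * ‖T w‖ := by gcongr

theorem exists_sq_norm_le_of_injective (hι : IsCompactOperator ι) (hT : Injective T)
    {ε : ℝ} (hε : 0 < ε) : ∃ c, ∀ u, ‖ι u‖ ^ 2 ≤ ε * ‖u‖ ^ 2 + c * ‖T u‖ ^ 2 := by
  obtain ⟨c, hc⟩ := hι.exists_sq_norm_le_add_of_norm_eq_one hT (half_pos hε)
  refine ⟨c ^ 2 / (2 * ε), sq_norm_le_of_forall_norm_eq_one fun w hw => (hc w hw).trans ?_⟩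
  have hamgm : c * ‖T w‖ ≤ ε / 2 + c ^ 2 / (2 * ε) * ‖T w‖ ^ 2 := by
    rw [div_mul_eq_mul_div, div_add_div _ _ two_ne_zero (by positivity),
      le_div_iff₀ (by positivity)]
    nlinarith [sq_nonneg (ε - c * ‖T w‖)]
  linarith

end IsCompactOperator

end Ehrling

section HarmonicSubspace

variable {V Hb : Type*} [NormedAddCommGroup V] [InnerProductSpace ℝ V]
  [NormedAddCommGroup Hb] [InnerProductSpace ℝ Hb]

/-- The paper's `V_j(𝔞)`: for `𝔞 = 𝔞_λ` these are the weak solutions of `𝒜u = λu`. -/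
def harmonicSubspace (a : V →L[ℝ] V →L[ℝ] ℝ) (j : V →L[ℝ] Hb) : Submodule ℝ V where
  carrier := {u | ∀ v, j v = 0 → a u v = 0}
  add_mem' hu hw v hv := by simp [hu v hv, hw v hv]
  zero_mem' := by simp
  smul_mem' c u hu v hv := by simp [hu v hv]

theorem isClosed_harmonicSubspace (a : V →L[ℝ] V →L[ℝ] ℝ) (j : V →L[ℝ] Hb) :
    IsClosed (harmonicSubspace a j : Set V) := by
  have : (harmonicSubspace a j : Set V) = ⋂ v, ⋂ (_ : j v = 0), {u | a.flip v u = 0} := by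
    ext u; simp [harmonicSubspace]
  rw [this]
  exact isClosed_iInter fun v => isClosed_iInter fun _ =>
    isClosed_eq (a.flip v).continuous continuous_const

end HarmonicSubspace

theorem DtN_form_elliptic_on_Vj_general
    {V H Hb : Type*} [NormedAddCommGroup V] [InnerProductSpace ℝ V] [CompleteSpace V]
    [NormedAddCommGroup H] [InnerProductSpace ℝ H]
    [NormedAddCommGroup Hb] [InnerProductSpace ℝ Hb] [CompleteSpace Hb]
    (ι : V →L[ℝ] H) (hιcompact : IsCompactOperator ι)
    (j : V →L[ℝ] Hb)
    (alam : V →L[ℝ] V →L[ℝ] ℝ)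
    (κ C : ℝ) (hκ : 0 < κ)
    -- the global estimate `𝔞_λ(u,u) + (|λ| + ω₁)‖ι u‖² ≥ (κ/2)‖u‖²` on `H¹(Ω)`:
    (hglobal : ∀ u : V, alam u u + C * ‖ι u‖ ^ 2 ≥ κ / 2 * ‖u‖ ^ 2)
    -- `j` is injective on `V_j(𝔞_λ)` (λ ∉ σ(A_D)):
    (hinj : Set.InjOn j {u : V | ∀ v : V, j v = 0 → alam u v = 0}) :
    ∃ ω : ℝ, ∀ u ∈ {u : V | ∀ v : V, j v = 0 → alam u v = 0},
      alam u u + ω * ‖j u‖ ^ 2 ≥ κ / 4 * ‖u‖ ^ 2 := by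
  let K := harmonicSubspace alam j
  have : CompleteSpace K := (isClosed_harmonicSubspace alam j).completeSpace_coe
  have hjK : Injective (j ∘L K.subtypeL) := fun u w huw => Subtype.ext (hinj u.2 w.2 huw)
  have hC : 0 < |C| + 1 := by positivity
  obtain ⟨c, hc⟩ := (hιcompact.comp_clm K.subtypeL).exists_sq_norm_le_of_injective
    (ι := ι ∘L K.subtypeL) hjK (ε := κ / (4 * (|C| + 1))) (by positivity)
  refine ⟨(|C| + 1) * c, fun u hu => ?_⟩
  have hιu : (|C| + 1) * ‖ι u‖ ^ 2 ≤ κ / 4 * ‖u‖ ^ 2 + (|C| + 1) * c * ‖j u‖ ^ 2 := by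
    calc (|C| + 1) * ‖ι u‖ ^ 2
        ≤ (|C| + 1) * (κ / (4 * (|C| + 1)) * ‖u‖ ^ 2 + c * ‖j u‖ ^ 2) :=
          mul_le_mul_of_nonneg_left (hc ⟨u, hu⟩) hC.le
      _ = κ / 4 * ‖u‖ ^ 2 + (|C| + 1) * c * ‖j u‖ ^ 2 := by field_simp
  have hCι : C * ‖ι u‖ ^ 2 ≤ (|C| + 1) * ‖ι u‖ ^ 2 := by
    gcongr; linarith [le_abs_self C]
  linarith [hglobal u]

/-- Ellipticity of the Dirichlet-to-Neumann form on `V_j(𝔞_λ)`: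
there is `ω ∈ ℝ` with `𝔞_λ(u,u) + ω‖u|_∂Ω‖²_{L²(∂Ω)} ≥ (κ/4)‖u‖²_{H¹(Ω)}` on `V_j(𝔞_λ)`.
Abstractly: `V = H¹(Ω)`, `H = L²(Ω)` with compact embedding `ι`, `Hb = L²(∂Ω)` with
compact trace `j`, `𝔞_λ` satisfies the global estimate
`𝔞_λ(u,u) + (|λ|+ω₁)‖ιu‖² ≥ (κ/2)‖u‖²` and `j` is injective on
`V_j(𝔞_λ) = {u : 𝔞_λ(u,v) = 0 ∀ v ∈ ker j}` (since `λ ∉ σ(A_D)`). -/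
theorem DtN_form_elliptic_on_Vj
    {V H Hb : Type*} [NormedAddCommGroup V] [InnerProductSpace ℝ V] [CompleteSpace V]
    [NormedAddCommGroup H] [InnerProductSpace ℝ H] [CompleteSpace H]
    [NormedAddCommGroup Hb] [InnerProductSpace ℝ Hb] [CompleteSpace Hb]
    (ι : V →L[ℝ] H) (hιcompact : IsCompactOperator ι)
    (j : V →L[ℝ] Hb) (hjcompact : IsCompactOperator j) (hjdense : DenseRange j)
    (alam : V →L[ℝ] V →L[ℝ] ℝ)
    (κ C : ℝ) (hκ : 0 < κ)
    -- the global estimate `𝔞_λ(u,u) + (|λ| + ω₁)‖ι u‖² ≥ (κ/2)‖u‖²` on `H¹(Ω)`: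
    (hglobal : ∀ u : V, alam u u + C * ‖ι u‖ ^ 2 ≥ κ / 2 * ‖u‖ ^ 2)
    -- `j` is injective on `V_j(𝔞_λ)` (λ ∉ σ(A_D)):
    (hinj : Set.InjOn j {u : V | ∀ v : V, j v = 0 → alam u v = 0}) :
    ∃ ω : ℝ, ∀ u ∈ {u : V | ∀ v : V, j v = 0 → alam u v = 0},
      alam u u + ω * ‖j u‖ ^ 2 ≥ κ / 4 * ‖u‖ ^ 2 :=
  DtN_form_elliptic_on_Vj_general ι hιcompact j alam κ C hκ hglobal hinj
end

section
/- Let Ω ⊂ ℝ^N be bounded open with Lipschitz boundary, coefficients as in the Hypothesis, λ ∉ σ(A_D), β ∈ ℝ. Let A_β be the Robin realization of 𝒜 (boundary condition ∂_ν u + β u|_{∂Ω} = 0) and D_λ^𝒜 the Dirichlet-to-Neumann operator. Then the map u ↦ u|_{∂Ω} is a linear isomorphism from the kernel of (λ − A_β) onto the kernel of (β + D_λ^𝒜). -/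
open scoped RealInnerProductSpace

/-! Both kernels are described by the same weak equation `𝔞(u,v) - λ⟨u,v⟩ = -β⟨ju, jv⟩`,
so the trace maps the Robin eigenspace onto `ker(β + D_λ^𝒜)`. Two eigenfunctions with the
same trace differ by a solution of the Dirichlet problem for `λ`, which vanishes since
`λ ∉ σ(A_D)`. -/

section RobinDirichletToNeumann

variable {V H Hb : Type*} [NormedAddCommGroup V] [InnerProductSpace ℝ V]
  [NormedAddCommGroup H] [InnerProductSpace ℝ H] [NormedAddCommGroup Hb] [InnerProductSpace ℝ Hb]
  (ι : V →L[ℝ] H) (j : V →L[ℝ] Hb) (a : V →L[ℝ] V →L[ℝ] ℝ) (lam β : ℝ)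

theorem robin_eigen_iff_dtn_eigen (u : V) :
    (∀ v : V, a u v + β * ⟪j u, j v⟫ = lam * ⟪ι u, ι v⟫) ↔
      ∀ v : V, a u v - lam * ⟪ι u, ι v⟫ = ⟪-β • j u, j v⟫ := by
  refine forall_congr' fun v => ?_
  rw [real_inner_smul_left]
  constructor <;> intro h <;> linarith

variable {ι j a lam β} in
theorem dirichlet_eigen_sub_of_robin_eigen {u₁ u₂ : V}
    (h₁ : ∀ v : V, a u₁ v + β * ⟪j u₁, j v⟫ = lam * ⟪ι u₁, ι v⟫)
    (h₂ : ∀ v : V, a u₂ v + β * ⟪j u₂, j v⟫ = lam * ⟪ι u₂, ι v⟫) {v : V} (hv : j v = 0) :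
    a (u₁ - u₂) v = lam * ⟪ι (u₁ - u₂), ι v⟫ := by
  have e₁ := h₁ v
  have e₂ := h₂ v
  simp only [hv, inner_zero_right, mul_zero, add_zero] at e₁ e₂
  rw [map_sub, map_sub, sub_apply, inner_sub_left, e₁, e₂, mul_sub]

end RobinDirichletToNeumann

/-- Abstractly: `V = H¹(Ω)`, `H = L²(Ω)` with embedding `ι`, `Hb = L²(∂Ω)` with trace `j`;
an eigenfunction of `A_β` for `λ` is `u ∈ V` with `𝔞(u,v) + β⟨ju, jv⟩ = λ⟨ιu, ιv⟩` for all `v`,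
and `φ ∈ ker(β + D_λ^𝒜)` means `φ = j u` for some `u` with `𝔞(u,v) − λ⟨ιu,ιv⟩ = ⟨−βφ, jv⟩`
for all `v`. -/
theorem trace_iso_ker_Robin_ker_DtN_general
    {V H Hb : Type*} [NormedAddCommGroup V] [InnerProductSpace ℝ V]
    [NormedAddCommGroup H] [InnerProductSpace ℝ H]
    [NormedAddCommGroup Hb] [InnerProductSpace ℝ Hb]
    (ι : V →L[ℝ] H)
    (j : V →L[ℝ] Hb)
    (a : V →L[ℝ] V →L[ℝ] ℝ) (lam β : ℝ)
    -- `λ ∉ σ(A_D)`: `λ` is not an eigenvalue of the Dirichlet realization `A_D`: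
    (hAD : ∀ u : V, j u = 0 → (∀ v : V, j v = 0 → a u v = lam * ⟪ι u, ι v⟫) → u = 0) :
    Set.InjOn j {u : V | ∀ v : V, a u v + β * ⟪j u, j v⟫ = lam * ⟪ι u, ι v⟫} ∧
      j '' {u : V | ∀ v : V, a u v + β * ⟪j u, j v⟫ = lam * ⟪ι u, ι v⟫} =
        {φ : Hb | ∃ u : V, j u = φ ∧
          ∀ v : V, a u v - lam * ⟪ι u, ι v⟫ = ⟪-β • φ, j v⟫} := by
  refine ⟨fun u₁ h₁ u₂ h₂ hj => sub_eq_zero.mp ?_, ?_⟩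
  · have htrace : j (u₁ - u₂) = 0 := by rw [map_sub, hj, sub_self]
    exact hAD _ htrace fun v hv => dirichlet_eigen_sub_of_robin_eigen h₁ h₂ hv
  · ext φ
    simp only [Set.mem_image, Set.mem_ofPred_eq, robin_eigen_iff_dtn_eigen ι j a lam β]
    constructor
    · rintro ⟨u, hu, rfl⟩
      exact ⟨u, rfl, hu⟩
    · rintro ⟨u, rfl, hu⟩
      exact ⟨u, hu, rfl⟩

/-- The trace map `u ↦ u|_∂Ω` is a linear isomorphism from
`ker(λ − A_β)` onto `ker(β + D_λ^𝒜)`. Abstractly: `V = H¹(Ω)`, `H = L²(Ω)` with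
embedding `ι`, `Hb = L²(∂Ω)` with trace `j`; an eigenfunction of `A_β` for `λ` is
`u ∈ V` with `𝔞(u,v) + β⟨ju, jv⟩ = λ⟨ιu, ιv⟩` for all `v`, and `φ ∈ ker(β + D_λ^𝒜)`
means `φ = j u` for some `u` with `𝔞(u,v) − λ⟨ιu,ιv⟩ = ⟨−βφ, jv⟩` for all `v`.
The condition `λ ∉ σ(A_D)` is encoded by `hAD`. -/
theorem trace_iso_ker_Robin_ker_DtN
    {V H Hb : Type*} [NormedAddCommGroup V] [InnerProductSpace ℝ V] [CompleteSpace V]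
    [NormedAddCommGroup H] [InnerProductSpace ℝ H] [CompleteSpace H]
    [NormedAddCommGroup Hb] [InnerProductSpace ℝ Hb] [CompleteSpace Hb]
    (ι : V →L[ℝ] H) (hι : Function.Injective ι) (hιdense : DenseRange ι)
    (j : V →L[ℝ] Hb) (hjdense : DenseRange j)
    (a : V →L[ℝ] V →L[ℝ] ℝ) (lam β : ℝ)
    -- `λ ∉ σ(A_D)`: `λ` is not an eigenvalue of the Dirichlet realization `A_D`:
    (hAD : ∀ u : V, j u = 0 → (∀ v : V, j v = 0 → a u v = lam * ⟪ι u, ι v⟫) → u = 0) :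
    Set.InjOn j {u : V | ∀ v : V, a u v + β * ⟪j u, j v⟫ = lam * ⟪ι u, ι v⟫} ∧
      j '' {u : V | ∀ v : V, a u v + β * ⟪j u, j v⟫ = lam * ⟪ι u, ι v⟫} =
        {φ : Hb | ∃ u : V, j u = φ ∧
          ∀ v : V, a u v - lam * ⟪ι u, ι v⟫ = ⟪-β • φ, j v⟫} :=
  trace_iso_ker_Robin_ker_DtN_general ι j a lam β hAD
end

section
/- Under the above setting (Ω bounded Lipschitz, λ ∉ σ(A_D), β ∈ ℝ): −β is an eigenvalue of D_λ^𝒜 if and only if λ is an eigenvalue of A_β. Since both operators have compact resolvent (hence pure point spectrum), −β ∈ σ(D_λ^𝒜) iff λ ∈ σ(A_β). -/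
open scoped RealInnerProductSpace

/-! A DtN eigenvector `φ = j u` with eigenvalue `-β` and a Robin eigenfunction `u` satisfy the
same weak identity `a u v + β ⟪j u, j v⟫ = λ ⟪ι u, ι v⟫` for all `v`. What remains is that the
two nondegeneracy conditions agree: `j u ≠ 0` forces `ι u ≠ 0` because `ι` is injective, and
`ι u ≠ 0` forces `j u ≠ 0` because otherwise `u` would be a Dirichlet eigenfunction for `λ`. -/

theorem sub_eq_inner_neg_smul_iff {E : Type*} [NormedAddCommGroup E] [InnerProductSpace ℝ E]
    (x y lam β : ℝ) (φ ψ : E) :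
    x - lam * y = ⟪-β • φ, ψ⟫ ↔ x + β * ⟪φ, ψ⟫ = lam * y := by
  rw [real_inner_smul_left]
  constructor <;> intro h <;> linarith

section Robin

variable {V H Hb : Type*} [NormedAddCommGroup V] [InnerProductSpace ℝ V]
  [NormedAddCommGroup H] [InnerProductSpace ℝ H] [NormedAddCommGroup Hb] [InnerProductSpace ℝ Hb]
  (ι : V →L[ℝ] H) (j : V →L[ℝ] Hb) (a : V →L[ℝ] V →L[ℝ] ℝ) (lam β : ℝ)

theorem dtn_identity_iff_robin_identity (u : V) :
    (∀ v : V, a u v - lam * ⟪ι u, ι v⟫ = ⟪-β • j u, j v⟫) ↔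
      ∀ v : V, a u v + β * ⟪j u, j v⟫ = lam * ⟪ι u, ι v⟫ :=
  forall_congr' fun _ => sub_eq_inner_neg_smul_iff _ _ _ _ _ _

theorem trace_ne_zero_of_robin_eigenfunction
    (hAD : ∀ u : V, j u = 0 → (∀ v : V, j v = 0 → a u v = lam * ⟪ι u, ι v⟫) → u = 0)
    {u : V} (hu : ι u ≠ 0) (hrob : ∀ v : V, a u v + β * ⟪j u, j v⟫ = lam * ⟪ι u, ι v⟫) :
    j u ≠ 0 := by
  intro hju
  have hdir : ∀ v : V, j v = 0 → a u v = lam * ⟪ι u, ι v⟫ := fun v _ => by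
    simpa [hju] using hrob v
  exact hu (by rw [hAD u hju hdir, map_zero])

end Robin

theorem eigenvalue_DtN_iff_eigenvalue_Robin_general
    {V H Hb : Type*} [NormedAddCommGroup V] [InnerProductSpace ℝ V]
    [NormedAddCommGroup H] [InnerProductSpace ℝ H]
    [NormedAddCommGroup Hb] [InnerProductSpace ℝ Hb]
    (ι : V →L[ℝ] H) (hι : Function.Injective ι)
    (j : V →L[ℝ] Hb)
    (a : V →L[ℝ] V →L[ℝ] ℝ) (lam β : ℝ)
    -- `λ ∉ σ(A_D)`:
    (hAD : ∀ u : V, j u = 0 → (∀ v : V, j v = 0 → a u v = lam * ⟪ι u, ι v⟫) → u = 0) :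
    (∃ φ : Hb, φ ≠ 0 ∧ ∃ u : V, j u = φ ∧
        ∀ v : V, a u v - lam * ⟪ι u, ι v⟫ = ⟪-β • φ, j v⟫) ↔
      ∃ u : V, ι u ≠ 0 ∧ ∀ v : V, a u v + β * ⟪j u, j v⟫ = lam * ⟪ι u, ι v⟫ := by
  constructor
  · rintro ⟨_, hφ, u, rfl, hdtn⟩
    have hu : u ≠ 0 := fun h => hφ (by rw [h, map_zero])
    exact ⟨u, (map_ne_zero_iff ι hι).2 hu,
      (dtn_identity_iff_robin_identity ι j a lam β u).1 hdtn⟩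
  · rintro ⟨u, hu, hrob⟩
    exact ⟨j u, trace_ne_zero_of_robin_eigenfunction ι j a lam β hAD hu hrob, u, rfl,
      (dtn_identity_iff_robin_identity ι j a lam β u).2 hrob⟩

/-- `−β` is an eigenvalue of the Dirichlet-to-Neumann operator `D_λ^𝒜`
if and only if `λ` is an eigenvalue of the Robin realization `A_β`; since both operators
have compact resolvent (pure point spectrum), `−β ∈ σ(D_λ^𝒜)` iff `λ ∈ σ(A_β)`.
Abstract setting as in the previous statement; nonzero eigenfunctions of `A_β` are
detected in `H = L²(Ω)` via `ι`, and eigenvectors of `D_λ^𝒜` in `Hb = L²(∂Ω)`. -/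
theorem eigenvalue_DtN_iff_eigenvalue_Robin
    {V H Hb : Type*} [NormedAddCommGroup V] [InnerProductSpace ℝ V] [CompleteSpace V]
    [NormedAddCommGroup H] [InnerProductSpace ℝ H] [CompleteSpace H]
    [NormedAddCommGroup Hb] [InnerProductSpace ℝ Hb] [CompleteSpace Hb]
    (ι : V →L[ℝ] H) (hι : Function.Injective ι) (hιdense : DenseRange ι)
    (j : V →L[ℝ] Hb) (hjdense : DenseRange j)
    (a : V →L[ℝ] V →L[ℝ] ℝ) (lam β : ℝ)
    -- `λ ∉ σ(A_D)`:
    (hAD : ∀ u : V, j u = 0 → (∀ v : V, j v = 0 → a u v = lam * ⟪ι u, ι v⟫) → u = 0) :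
    (∃ φ : Hb, φ ≠ 0 ∧ ∃ u : V, j u = φ ∧
        ∀ v : V, a u v - lam * ⟪ι u, ι v⟫ = ⟪-β • φ, j v⟫) ↔
      ∃ u : V, ι u ≠ 0 ∧ ∀ v : V, a u v + β * ⟪j u, j v⟫ = lam * ⟪ι u, ι v⟫ :=
  eigenvalue_DtN_iff_eigenvalue_Robin_general ι hι j a lam β hAD
end
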